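/- For all x, y ∈ {o,b}, (x,y)-generic bisimilarity with explicit divergence ≈ed_{(x,y)} satisfies the stuttering property: whenever t0 →τ t1 →τ ⋯ →τ tk and t0 ≈ed_{(x,y)} tk, then ti ≈ed_{(x,y)} tj for all 0 ≤ i, j ≤ k. -/

import Mathlib

namespace GamesBisim

/-- Parameter values `o` (ordinary) and `b` (branching) for generic bisimulations. -/
inductive XY | o | b
deriving DecidableEq

/-- The faces ☹ (frown) and ☺ (smile). -/
inductive Face | frown | smile
deriving DecidableEq

/-- Rewards: `*` (star) and `✓` (check). -/
inductive Rw | star | check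
deriving DecidableEq

/-- A labelled transition system with states `S`, actions `A` containing a
distinguished silent action `tau`, and a transition relation. -/
structure LTS (S : Type u) (A : Type v) where
  tau : A
  Trans : S → A → S → Prop

namespace LTS

variable {S : Type u} {A : Type v}

/-- A single silent (τ) step. -/
def TauStep (L : LTS S A) (s s' : S) : Prop := L.Trans s L.tau s'

/-- `↠`: the reflexive-transitive closure of the τ-step relation. -/
def TauStar (L : LTS S A) : S → S → Prop := Relation.ReflTransGen L.TauStep

/-- `↠⁺`: the transitive closure of the τ-step relation. -/
def TauPlus (L : LTS S A) : S → S → Prop := Relation.TransGen L.TauStep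

/-- An LTS is non-divergent if it admits no infinite sequence of τ-steps. -/
def NonDivergent (L : LTS S A) : Prop :=
  ¬ ∃ f : ℕ → S, ∀ i, L.TauStep (f i) (f (i + 1))

/-- A symmetric relation `R` is a branching bisimulation. -/
def IsBranchingBisim (L : LTS S A) (R : S → S → Prop) : Prop :=
  (∀ s t, R s t → R t s) ∧
  ∀ s t a s', R s t → L.Trans s a s' →
    (a = L.tau ∧ R s' t) ∨
    ∃ t1 t', L.TauStar t t1 ∧ L.Trans t1 a t' ∧ R s t1 ∧ R s' t'

/-- Branching bisimilarity `≈b`. -/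
def BranchingBisimilar (L : LTS S A) (s t : S) : Prop :=
  ∃ R, L.IsBranchingBisim R ∧ R s t

/-- A symmetric relation `R` is a delay bisimulation. -/
def IsDelayBisim (L : LTS S A) (R : S → S → Prop) : Prop :=
  (∀ s t, R s t → R t s) ∧
  ∀ s t a s', R s t → L.Trans s a s' →
    (a = L.tau ∧ R s' t) ∨
    ∃ t1 t', L.TauStar t t1 ∧ L.Trans t1 a t' ∧ R s' t'

/-- The generalised weak transition `s ↠_{x,R,t} s'`: a weak transition `s ↠ s'`,
which in case `x = b` additionally satisfies `t R s` and `t R s'`. -/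
def GenTauStar (L : LTS S A) (x : XY) (R : S → S → Prop) (t : S) (s s' : S) : Prop :=
  L.TauStar s s' ∧ (x = XY.b → R t s ∧ R t s')

/-- The strong generalised weak transition `s ⟹_{x,R,t} s'`: a weak transition
`s ↠ s'`, which in case `x = b` is witnessed by a finite τ-path all of whose states
are related to `t` by `R`. -/
def SGenTauStar (L : LTS S A) (x : XY) (R : S → S → Prop) (t : S) (s s' : S) : Prop :=
  L.TauStar s s' ∧
  (x = XY.b → R t s ∧ Relation.ReflTransGen (fun u u' => L.TauStep u u' ∧ R t u') s s')

/-- A symmetric relation `R` is an `(x,y)`-generic bisimulation. -/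
def IsGenBisim (L : LTS S A) (x y : XY) (R : S → S → Prop) : Prop :=
  (∀ s t, R s t → R t s) ∧
  ∀ s t a s', R s t → L.Trans s a s' →
    (a = L.tau ∧ R s' t) ∨
    ∃ t1 t2 t', L.GenTauStar x R s t t1 ∧ L.Trans t1 a t2 ∧
      L.GenTauStar y R s' t2 t' ∧ R s' t'

/-- `(x,y)`-generic bisimilarity `≈_{(x,y)}`. -/
def GenBisimilar (L : LTS S A) (x y : XY) (s t : S) : Prop :=
  ∃ R, L.IsGenBisim x y R ∧ R s t

/-- A symmetric relation `R` is an `(x,y)`-generic bisimulation with explicit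
divergence (divergence condition D₄). -/
def IsGenBisimED (L : LTS S A) (x y : XY) (R : S → S → Prop) : Prop :=
  L.IsGenBisim x y R ∧
  ∀ s t, R s t → ∀ f : ℕ → S, f 0 = s → (∀ i, L.TauStep (f i) (f (i + 1))) →
    ∃ t' k, L.TauPlus t t' ∧ R (f k) t'

/-- `(x,y)`-generic bisimilarity with explicit divergence `≈ed_{(x,y)}`. -/
def GenBisimilarED (L : LTS S A) (x y : XY) (s t : S) : Prop :=
  ∃ R, L.IsGenBisimED x y R ∧ R s t

end LTS

/-- A relation `R` has the stuttering property: whenever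
`t₀ →τ t₁ →τ ⋯ →τ t_k` and `t₀ R t_k`, then `t_i R t_j` for all `0 ≤ i,j ≤ k`. -/
def StutteringProperty {S : Type u} {A : Type v} (L : LTS S A) (R : S → S → Prop) : Prop :=
  ∀ (k : ℕ) (t : ℕ → S),
    (∀ i < k, L.TauStep (t i) (t (i + 1))) → R (t 0) (t k) →
    ∀ i j, i ≤ k → j ≤ k → R (t i) (t j)

/-! ## Two-player games

A play is a maximal (finite or infinite) sequence of configurations connected by
moves, represented as `π : ℕ → Option C` which is `none` from the point (if any)
where the play has ended; a play may only end in a configuration whose owner is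
stuck. A strategy for a player is a (positional) function `σ : C → C` which is
required to pick a legal move at every configuration owned by that player admitting
at least one move; a play is consistent with `σ` if every move taken from a
configuration owned by that player follows `σ`. -/

section Games

variable {C : Type u}

/-- `π` is a maximal play of the game with move relation `move`. -/
def IsPlay (move : C → C → Prop) (π : ℕ → Option C) : Prop :=
  (∀ i c d, π i = some c → π (i + 1) = some d → move c d) ∧
  (∀ i c, π i = some c → π (i + 1) = none → ∀ d, ¬ move c d) ∧
  (∀ i, π i = none → π (i + 1) = none)

/-- The play `π` is consistent with strategy `σ` of the player owning the
configurations satisfying `owned`. -/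
def ConsistentWith (owned : C → Prop) (σ : C → C) (π : ℕ → Option C) : Prop :=
  ∀ i c d, π i = some c → owned c → π (i + 1) = some d → d = σ c

/-- `σ` is a valid strategy for the player owning the configurations satisfying
`owned`: it picks a legal move wherever a move exists. -/
def ValidStrategy (owned : C → Prop) (move : C → C → Prop) (σ : C → C) : Prop :=
  ∀ c, owned c → (∃ d, move c d) → move c (σ c)

/-- The play `π` is finite and ends in the configuration `c`. -/
def EndsAt (π : ℕ → Option C) (c : C) : Prop := ∃ i, π i = some c ∧ π (i + 1) = none

/-- The play `π` is infinite. -/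
def InfinitePlay (π : ℕ → Option C) : Prop := ∀ i, π i ≠ none

/-- The Büchi winning condition on infinite plays: the play passes through
infinitely many configurations carrying a `✓` reward. -/
def BuchiWin (reward : C → Prop) (π : ℕ → Option C) : Prop :=
  ∀ n, ∃ i, n ≤ i ∧ ∃ c, π i = some c ∧ reward c

/-- Duplicator wins the play `π`: either the play is finite and Spoiler is stuck,
or the play is infinite and satisfies the winning condition `infWin`. -/
def DupWinsPlay (dupOwned : C → Prop) (infWin : (ℕ → Option C) → Prop)
    (π : ℕ → Option C) : Prop :=
  (∃ c, EndsAt π c ∧ ¬ dupOwned c) ∨ (InfinitePlay π ∧ infWin π)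

/-- Spoiler wins the play `π` (all plays not won by Duplicator). -/
def SpWinsPlay (dupOwned : C → Prop) (infWin : (ℕ → Option C) → Prop)
    (π : ℕ → Option C) : Prop :=
  (∃ c, EndsAt π c ∧ dupOwned c) ∨ (InfinitePlay π ∧ ¬ infWin π)

/-- Duplicator wins the configuration `c`: she has a strategy winning all plays
starting in `c`. -/
def DupWins (dupOwned : C → Prop) (move : C → C → Prop)
    (infWin : (ℕ → Option C) → Prop) (c : C) : Prop :=
  ∃ σ : C → C, ValidStrategy dupOwned move σ ∧
    ∀ π, IsPlay move π → π 0 = some c → ConsistentWith dupOwned σ π →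
      DupWinsPlay dupOwned infWin π

/-- Spoiler wins the configuration `c`: he has a strategy winning all plays
starting in `c`. -/
def SpWins (dupOwned : C → Prop) (move : C → C → Prop)
    (infWin : (ℕ → Option C) → Prop) (c : C) : Prop :=
  ∃ σ : C → C, ValidStrategy (fun d => ¬ dupOwned d) move σ ∧
    ∀ π, IsPlay move π → π 0 = some c → ConsistentWith (fun d => ¬ dupOwned d) σ π →
      SpWinsPlay dupOwned infWin π

end Games

/-! ## The limited branching bisimulation (lbb) game -/

/-- Configurations of the lbb game: Spoiler-owned `⟨(s,t)⟩` and Duplicator-owned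
`⟨(s,t),(a,s')⟩`. -/
inductive LConf (S : Type u) (A : Type v)
  | sp (p : S × S)
  | dup (p : S × S) (c : A × S)

/-- Ownership in the lbb game. -/
def LConf.dupOwned {S : Type u} {A : Type v} : LConf S A → Prop
  | .sp _ => False
  | .dup _ _ => True

/-- Moves of the lbb game. -/
inductive LMove {S : Type u} {A : Type v} (L : LTS S A) : LConf S A → LConf S A → Prop
  | sp1 {s t a s'} (h : L.Trans s a s') :
      LMove L (LConf.sp (s, t)) (LConf.dup (s, t) (a, s'))
  | sp2 {s t a t'} (h : L.Trans t a t') :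
      LMove L (LConf.sp (s, t)) (LConf.dup (t, s) (a, t'))
  | dup1 {u v u'} :
      LMove L (LConf.dup (u, v) (L.tau, u')) (LConf.sp (u', v))
  | dup2 {u v a u' v'} (h : L.Trans v a v') :
      LMove L (LConf.dup (u, v) (a, u')) (LConf.sp (u', v'))
  | dup3 {u v a u' v'} (h : L.TauStep v v') :
      LMove L (LConf.dup (u, v) (a, u')) (LConf.sp (u, v'))

/-- `s ≡lb t`: Duplicator wins the lbb game from `⟨(s,t)⟩_S`; finite plays are won
by Duplicator iff Spoiler is stuck, and all infinite plays are won by Duplicator. -/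
def LTS.lbbEquiv {S : Type u} {A : Type v} (L : LTS S A) (s t : S) : Prop :=
  DupWins LConf.dupOwned (LMove L) (fun _ => True) (LConf.sp (s, t))

/-! ## The branching bisimulation (bb) game -/

/-- Configurations of the bb game: `⟨(s,t),c,r⟩` owned by Spoiler or Duplicator,
with challenge `c ∈ (A × S) ∪ {†}` (where `none` is `†`) and reward `r`. -/
inductive BConf (S : Type u) (A : Type v)
  | sp (p : S × S) (c : Option (A × S)) (r : Rw)
  | dup (p : S × S) (c : Option (A × S)) (r : Rw)

/-- Ownership in the bb game. -/
def BConf.dupOwned {S : Type u} {A : Type v} : BConf S A → Prop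
  | .sp _ _ _ => False
  | .dup _ _ _ => True

/-- The configuration carries a `✓` reward. -/
def BConf.reward {S : Type u} {A : Type v} : BConf S A → Prop
  | .sp _ _ r => r = Rw.check
  | .dup _ _ r => r = Rw.check

/-- Moves of the bb game. -/
inductive BMove {S : Type u} {A : Type v} (L : LTS S A) : BConf S A → BConf S A → Prop
  | sp1star {s t c r a s'} (h : L.Trans s a s') (hc : c = some (a, s') ∨ c = none) :
      BMove L (BConf.sp (s, t) c r) (BConf.dup (s, t) (some (a, s')) Rw.star)
  | sp1check {s t c r a s'} (h : L.Trans s a s')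
      (hc : ¬(c = some (a, s') ∨ c = none)) :
      BMove L (BConf.sp (s, t) c r) (BConf.dup (s, t) (some (a, s')) Rw.check)
  | sp2 {s t c r a t'} (h : L.Trans t a t') :
      BMove L (BConf.sp (s, t) c r) (BConf.dup (t, s) (some (a, t')) Rw.check)
  | dup1 {u v u' r} :
      BMove L (BConf.dup (u, v) (some (L.tau, u')) r) (BConf.sp (u', v) none Rw.check)
  | dup2 {u v a u' v' r} (h : L.Trans v a v') :
      BMove L (BConf.dup (u, v) (some (a, u')) r) (BConf.sp (u', v') none Rw.check)
  | dup3 {u v a u' v' r} (h : L.TauStep v v') :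
      BMove L (BConf.dup (u, v) (some (a, u')) r)
        (BConf.sp (u, v') (some (a, u')) Rw.star)

/-- `s ≡b t`: Duplicator wins the bb game from `⟨(s,t),†,*⟩_S`, where infinite
plays are won by Duplicator iff they yield infinitely many `✓` rewards. -/
def LTS.bbEquiv {S : Type u} {A : Type v} (L : LTS S A) (s t : S) : Prop :=
  DupWins BConf.dupOwned (BMove L) (BuchiWin BConf.reward) (BConf.sp (s, t) none Rw.star)

/-! ## The generic bisimulation (gb) game, and its explicit-divergence variant -/

/-- Configurations of the generic games: `⟨(s,t),c,m,r⟩` owned by Spoiler or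
Duplicator, with challenge `c ∈ (A × S) ∪ {†}`, partial match
`m ∈ (S × {☹,☺}) ∪ {†}` and reward `r`. -/
inductive GConf (S : Type u) (A : Type v)
  | sp (p : S × S) (c : Option (A × S)) (m : Option (S × Face)) (r : Rw)
  | dup (p : S × S) (c : Option (A × S)) (m : Option (S × Face)) (r : Rw)

/-- Ownership in the generic games. -/
def GConf.dupOwned {S : Type u} {A : Type v} : GConf S A → Prop
  | .sp _ _ _ _ => False
  | .dup _ _ _ _ => True

/-- The configuration carries a `✓` reward. -/
def GConf.reward {S : Type u} {A : Type v} : GConf S A → Prop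
  | .sp _ _ _ r => r = Rw.check
  | .dup _ _ _ r => r = Rw.check

/-- Moves of the `E`-generic bisimulation game. The parameter `rw1` is the reward
handed out by Duplicator's rule (1): `✓` in the gb game, `*` in the gbed game. -/
inductive GMove {S : Type u} {A : Type v} (L : LTS S A) (E : Set Face) (rw1 : Rw) :
    GConf S A → GConf S A → Prop
  | sp1 {s t c m r} (hc : c ≠ none) :
      GMove L E rw1 (GConf.sp (s, t) c m r) (GConf.dup (s, t) c m Rw.star)
  | sp2a {s t m r a s'} (h : L.Trans s a s') :
      GMove L E rw1 (GConf.sp (s, t) none m r)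
        (GConf.dup (s, t) (some (a, s')) (some (t, Face.frown)) Rw.star)
  | sp2b {s t c m r a s'} (h : L.Trans s a s') (hc : c ≠ some (a, s')) :
      GMove L E rw1 (GConf.sp (s, t) c m r)
        (GConf.dup (s, t) (some (a, s')) (some (t, Face.frown)) Rw.check)
  | sp3 {s t c m r a t'} (h : L.Trans t a t') :
      GMove L E rw1 (GConf.sp (s, t) c m r)
        (GConf.dup (t, s) (some (a, t')) (some (s, Face.frown)) Rw.check)
  | dup1 {u v u' vb f r} :
      GMove L E rw1 (GConf.dup (u, v) (some (L.tau, u')) (some (vb, f)) r)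
        (GConf.sp (u', vb) none none rw1)
  | dup2a {u v a u' vb v' r} (h : L.Trans vb a v') :
      GMove L E rw1 (GConf.dup (u, v) (some (a, u')) (some (vb, Face.frown)) r)
        (GConf.sp (u', v') (some (a, u')) (some (v', Face.smile)) Rw.star)
  | dup2b {u v a u' vb v' r} (h : L.Trans vb a v') :
      GMove L E rw1 (GConf.dup (u, v) (some (a, u')) (some (vb, Face.frown)) r)
        (GConf.sp (u', v') none none Rw.check)
  | dup2c {u v a u' vb v' r} (h : L.Trans vb a v') (hE : Face.smile ∈ E) :
      GMove L E rw1 (GConf.dup (u, v) (some (a, u')) (some (vb, Face.frown)) r)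
        (GConf.sp (u, v) (some (a, u')) (some (v', Face.smile)) Rw.star)
  | dup3a {u v a u' vb f v' r} (h : L.TauStep vb v') :
      GMove L E rw1 (GConf.dup (u, v) (some (a, u')) (some (vb, f)) r)
        (GConf.sp (u, v') (some (a, u')) (some (v', f)) Rw.star)
  | dup3b {u v a u' vb v' r} (h : L.TauStep vb v') :
      GMove L E rw1 (GConf.dup (u, v) (some (a, u')) (some (vb, Face.smile)) r)
        (GConf.sp (u', v') none none Rw.check)
  | dup3c {u v a u' vb f v' r} (h : L.TauStep vb v') (hE : f ∈ E) :
      GMove L E rw1 (GConf.dup (u, v) (some (a, u')) (some (vb, f)) r)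
        (GConf.sp (u, v) (some (a, u')) (some (v', f)) Rw.star)

/-- `E(x,y) ⊆ {☹,☺}`: the smallest set containing `☹` when `x = o` and `☺` when
`y = o`. -/
def Exy (x y : XY) : Set Face :=
  {f | (f = Face.frown ∧ x = XY.o) ∨ (f = Face.smile ∧ y = XY.o)}

/-- `s ≡_E t`: Duplicator wins the `E`-generic bisimulation game from
`⟨(s,t),†,†,*⟩_S`; infinite plays are won by Duplicator iff they yield infinitely
many `✓` rewards. -/
def LTS.gbEquiv {S : Type u} {A : Type v} (L : LTS S A) (E : Set Face) (s t : S) : Prop :=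
  DupWins GConf.dupOwned (GMove L E Rw.check) (BuchiWin GConf.reward)
    (GConf.sp (s, t) none none Rw.star)

/-- `s ≡ed_E t`: Duplicator wins the `E`-generic bisimulation with explicit
divergence game from `⟨(s,t),†,†,*⟩_S`. -/
def LTS.gbedEquiv {S : Type u} {A : Type v} (L : LTS S A) (E : Set Face) (s t : S) : Prop :=
  DupWins GConf.dupOwned (GMove L E Rw.star) (BuchiWin GConf.reward)
    (GConf.sp (s, t) none none Rw.star)

/-- The abstraction function `f(⟨(s,t),c,m,r⟩) = ⟨(s,t),c,r⟩` from configurations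
of the generic game to configurations of the bb game, preserving ownership. -/
def fabs {S : Type u} {A : Type v} : GConf S A → BConf S A
  | .sp p c _ r => .sp p c r
  | .dup p c _ r => .dup p c r



/-! ### Auxiliary development for the stuttering property -/

namespace LTS

variable {S : Type u} {A : Type v}

/-- The response clause of a *semi* `(x,y)`-generic bisimulation: the τ-absorption
case additionally allows the partner to move silently. -/
def SResp (L : LTS S A) (x y : XY) (R : S → S → Prop) (s t : S) (a : A) (s' : S) : Prop :=
  (a = L.tau ∧ ∃ t', L.TauStar t t' ∧ R s' t' ∧ (x = XY.b → R s t')) ∨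
  (∃ t1 t2 t', L.GenTauStar x R s t t1 ∧ L.Trans t1 a t2 ∧ L.GenTauStar y R s' t2 t' ∧ R s' t')

/-- Semi `(x,y)`-generic bisimulation with explicit divergence. -/
def IsSemi (L : LTS S A) (x y : XY) (R : S → S → Prop) : Prop :=
  (∀ s t, R s t → R t s) ∧
  (∀ s t a s', R s t → L.Trans s a s' → L.SResp x y R s t a s') ∧
  (∀ s t, R s t → ∀ f : ℕ → S, f 0 = s → (∀ i, L.TauStep (f i) (f (i + 1))) →
    ∃ t' k, L.TauPlus t t' ∧ R (f k) t')

theorem GenTauStar.mono {L : LTS S A} {x : XY} {R R' : S → S → Prop}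
    (hRR : ∀ p q, R p q → R' p q) {t s s' : S} (h : L.GenTauStar x R t s s') :
    L.GenTauStar x R' t s s' :=
  ⟨h.1, fun hb => ⟨hRR _ _ ((h.2 hb).1), hRR _ _ ((h.2 hb).2)⟩⟩

theorem SResp.mono {L : LTS S A} {x y : XY} {R R' : S → S → Prop}
    (hRR : ∀ p q, R p q → R' p q) {s t : S} {a : A} {s' : S}
    (h : L.SResp x y R s t a s') : L.SResp x y R' s t a s' := by
  rcases h with ⟨ha, t', h1, h2, h3⟩ | ⟨t1, t2, t', h1, h2, h3, h4⟩
  · exact Or.inl ⟨ha, t', h1, hRR _ _ h2, fun hb => hRR _ _ (h3 hb)⟩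
  · exact Or.inr ⟨t1, t2, t', h1.mono hRR, h2, h3.mono hRR, hRR _ _ h4⟩

/-- Transfer of a weak silent transition along a semi bisimulation. -/
theorem semi_star {L : LTS S A} {x y : XY} {R : S → S → Prop}
    (hmv : ∀ s t a s', R s t → L.Trans s a s' → L.SResp x y R s t a s')
    {s s'' t : S} (hss : L.TauStar s s'') (hst : R s t) :
    ∃ t', L.TauStar t t' ∧ R s'' t' := by
  induction hss with
  | refl => exact ⟨t, Relation.ReflTransGen.refl, hst⟩
  | tail _ hstep ih =>
    obtain ⟨t', ht', hRc⟩ := ih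
    rcases hmv _ _ _ _ hRc hstep with ⟨_, t'', h1, h2, _⟩ | ⟨t1, t2, t'', h1, h2, h3, h4⟩
    · exact ⟨t'', ht'.trans h1, h2⟩
    · exact ⟨t'', ht'.trans ((h1.1.trans (Relation.ReflTransGen.single h2)).trans h3.1), h4⟩

/-- A strict generic bisimulation with explicit divergence is a semi one. -/
theorem IsGenBisimED.isSemi {L : LTS S A} {x y : XY} {R : S → S → Prop}
    (h : L.IsGenBisimED x y R) : L.IsSemi x y R := by
  refine ⟨h.1.1, fun s t a s' hR htr => ?_, h.2⟩
  rcases h.1.2 s t a s' hR htr with ⟨ha, hs⟩ | full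
  · exact Or.inl ⟨ha, t, Relation.ReflTransGen.refl, hs, fun _ => hR⟩
  · exact Or.inr full

/-- The stuttering extension of a semi bisimulation is a semi bisimulation. -/
theorem semi_stutter {L : LTS S A} {x y : XY} {R : S → S → Prop}
    (hR : L.IsSemi x y R) {k : ℕ} {t : ℕ → S}
    (hpath : ∀ i < k, L.TauStep (t i) (t (i + 1))) (hRk : R (t 0) (t k)) :
    L.IsSemi x y (fun p q => R p q ∨ ∃ i j, i ≤ k ∧ j ≤ k ∧ p = t i ∧ q = t j) := by
  have hstar : ∀ j, j ≤ k → ∀ i, i ≤ j → L.TauStar (t i) (t j) := by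
    intro j
    induction j with
    | zero =>
      intro _ i hi
      obtain rfl := Nat.le_zero.mp hi
      exact Relation.ReflTransGen.refl
    | succ n ih =>
      intro hk i hi
      rcases Nat.eq_or_lt_of_le hi with rfl | h
      · exact Relation.ReflTransGen.refl
      · exact (ih (Nat.le_of_succ_le hk) i (Nat.lt_succ_iff.mp h)).tail
          (hpath n (Nat.lt_of_succ_le hk))
  have sat : ∀ i ≤ k, ∃ u, L.TauStar (t k) u ∧ R (t i) u := fun i hik =>
    semi_star hR.2.1 (hstar i hik 0 (Nat.zero_le _)) hRk
  refine ⟨?_, ?_, ?_⟩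
  · rintro p q (h | ⟨i, j, hi, hj, rfl, rfl⟩)
    · exact Or.inl (hR.1 _ _ h)
    · exact Or.inr ⟨j, i, hj, hi, rfl, rfl⟩
  · rintro s tq a s' (hpq | ⟨i, j, hi, hj, rfl, rfl⟩) htr
    · exact (hR.2.1 _ _ _ _ hpq htr).mono (fun _ _ => Or.inl)
    · obtain ⟨u, hku, hiu⟩ := sat i hi
      have hjku : L.TauStar (t j) u := (hstar k le_rfl j hj).trans hku
      rcases hR.2.1 _ _ _ _ hiu htr with ⟨ha, u', h1, h2, h3⟩ | ⟨u1, u2, u3, h1, h2, h3, h4⟩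
      · exact Or.inl ⟨ha, u', hjku.trans h1, Or.inl h2, fun hb => Or.inl (h3 hb)⟩
      · refine Or.inr ⟨u1, u2, u3, ⟨hjku.trans h1.1, fun hb =>
          ⟨Or.inr ⟨i, j, hi, hj, rfl, rfl⟩, Or.inl (h1.2 hb).2⟩⟩, h2,
          h3.mono (fun _ _ => Or.inl), Or.inl h4⟩
  · rintro s tq (hpq | ⟨i, j, hi, hj, rfl, rfl⟩) f hf0 hfs
    · obtain ⟨t', m, h1, h2⟩ := hR.2.2 _ _ hpq f hf0 hfs
      exact ⟨t', m, h1, Or.inl h2⟩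
    · obtain ⟨u, hku, hiu⟩ := sat i hi
      obtain ⟨u', m, h1, h2⟩ := hR.2.2 _ _ hiu f hf0 hfs
      exact ⟨u', m, Relation.TransGen.trans_right ((hstar k le_rfl j hj).trans hku) h1,
        Or.inl h2⟩

/-- Move condition for the composition of two semi bisimulations. -/
theorem comp_move {L : LTS S A} {x y : XY} {R R'' : S → S → Prop}
    (hR : L.IsSemi x y R) (hR'' : L.IsSemi x y R'')
    {s u t : S} {a : A} {s' : S} (hsu : R s u) (hut : R'' u t) (htr : L.Trans s a s') :
    L.SResp x y (fun p q => ∃ v, R p v ∧ R'' v q) s t a s' := by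
  rcases hR.2.1 _ _ _ _ hsu htr with ⟨ha, u', hu1, hu2, hu3⟩ |
    ⟨u1, u2, u3, h1, h2, h3, h4⟩
  · -- R-level absorb
    obtain ⟨t1, ht1, hu't1⟩ := semi_star hR''.2.1 hu1 hut
    exact Or.inl ⟨ha, t1, ht1, ⟨u', hu2, hu't1⟩, fun hb => ⟨u', hu3 hb, hu't1⟩⟩
  · -- R-level full response
    obtain ⟨p1, hTp1, hu1p1⟩ := semi_star hR''.2.1 h1.1 hut
    rcases hR''.2.1 _ _ _ _ hu1p1 h2 with ⟨ha, p2, hp1p2, hu2p2, hx''⟩ |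
      ⟨q1, q2, q3, g1, g2, g3, g4⟩
    · -- R''-level absorb (so a = τ)
      obtain ⟨p3, hp2p3, hu3p3⟩ := semi_star hR''.2.1 h3.1 hu2p2
      cases y with
      | b =>
        exact Or.inl ⟨ha, p2, hTp1.trans hp1p2, ⟨u2, (h3.2 rfl).1, hu2p2⟩,
          fun hb => ⟨u1, (h1.2 hb).2, hx'' hb⟩⟩
      | o =>
        rcases hp2p3.cases_head with heq | ⟨w, hw, hwp3⟩
        · exact Or.inl ⟨ha, p2, hTp1.trans hp1p2, ⟨u3, h4, heq ▸ hu3p3⟩,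
            fun hb => ⟨u1, (h1.2 hb).2, hx'' hb⟩⟩
        · refine Or.inr ⟨p2, w, p3, ⟨hTp1.trans hp1p2, fun hb =>
            ⟨⟨u, hsu, hut⟩, ⟨u1, (h1.2 hb).2, hx'' hb⟩⟩⟩, ha ▸ hw,
            ⟨hwp3, fun hy => nomatch hy⟩, ⟨u3, h4, hu3p3⟩⟩
    · -- R''-level full response
      obtain ⟨q4, hq3q4, hu3q4⟩ := semi_star hR''.2.1 h3.1 g4
      refine Or.inr ⟨q1, q2, q4, ⟨hTp1.trans g1.1, fun hb =>
        ⟨⟨u, hsu, hut⟩, ⟨u1, (h1.2 hb).2, (g1.2 hb).2⟩⟩⟩, g2,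
        ⟨g3.1.trans hq3q4, fun hb => ⟨⟨u2, (h3.2 hb).1, (g3.2 hb).1⟩, ⟨u3, h4, hu3q4⟩⟩⟩,
        ⟨u3, h4, hu3q4⟩⟩

/-- Extracting an indexed finite path from a reflexive-transitive closure. -/
theorem pathOfStar {L : LTS S A} {a b : S} (h : L.TauStar a b) :
    ∃ (m : ℕ) (q : ℕ → S), q 0 = a ∧ q m = b ∧ ∀ i < m, L.TauStep (q i) (q (i + 1)) := by
  induction h with
  | refl => exact ⟨0, fun _ => a, rfl, rfl, fun i hi => absurd hi (Nat.not_lt_zero i)⟩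
  | tail _ hstep ih =>
    rename_i b' c _
    obtain ⟨m, q, hq0, hqm, hqs⟩ := ih
    refine ⟨m + 1, fun i => if i ≤ m then q i else c, by simp [hq0], by simp, ?_⟩
    intro i hi
    rcases Nat.lt_or_ge i m with him | him
    · simpa [Nat.le_of_lt him, Nat.succ_le_of_lt him] using hqs i him
    · have : i = m := Nat.le_antisymm (Nat.lt_succ_iff.mp hi) him
      subst this
      simpa [hqm] using hstep

/-- Extracting an indexed finite nonempty path from a transitive closure. -/
theorem pathOfPlus {L : LTS S A} {a b : S} (h : L.TauPlus a b) :
    ∃ (m : ℕ) (q : ℕ → S), 0 < m ∧ q 0 = a ∧ q m = b ∧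
      ∀ i < m, L.TauStep (q i) (q (i + 1)) := by
  obtain ⟨c, hac, hcb⟩ := Relation.TransGen.tail'_iff.mp h
  obtain ⟨m, q, hq0, hqm, hqs⟩ := pathOfStar (L := L) hac
  refine ⟨m + 1, fun i => if i ≤ m then q i else b, Nat.succ_pos m, by simp [hq0], by simp, ?_⟩
  intro i hi
  rcases Nat.lt_or_ge i m with him | him
  · simpa [Nat.le_of_lt him, Nat.succ_le_of_lt him] using hqs i him
  · have : i = m := Nat.le_antisymm (Nat.lt_succ_iff.mp hi) him
    subst this
    simpa [hqm] using hcb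

/-- Explicit-divergence condition for the composition of two semi bisimulations. -/
theorem comp_ED {L : LTS S A} {x y : XY} {R R'' : S → S → Prop}
    (hR : L.IsSemi x y R) (hR'' : L.IsSemi x y R'')
    {s u t : S} (hsu : R s u) (hut : R'' u t) (f : ℕ → S) (hf0 : f 0 = s)
    (hfs : ∀ i, L.TauStep (f i) (f (i + 1))) :
    ∃ t' k, L.TauPlus t t' ∧ ∃ v, R (f k) v ∧ R'' v t' := by
  classical
  -- milestones along the divergence of `s`
  have key : ∀ p : {vn : S × ℕ // R (f vn.2) vn.1},
      ∃ q : {vn : S × ℕ // R (f vn.2) vn.1}, L.TauPlus p.1.1 q.1.1 := by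
    rintro ⟨⟨v, n⟩, hv⟩
    obtain ⟨v', m, hp, hr⟩ := hR.2.2 _ _ hv (fun i => f (n + i)) rfl (fun i => hfs (n + i))
    exact ⟨⟨(v', n + m), hr⟩, hp⟩
  let U : ℕ → {vn : S × ℕ // R (f vn.2) vn.1} :=
    fun i => Nat.rec (motive := fun _ => {vn : S × ℕ // R (f vn.2) vn.1}) ⟨(u, 0), hf0 ▸ hsu⟩ (fun _ p => Classical.choose (key p)) i
  have hU : ∀ i, L.TauPlus ((U i).1.1) ((U (i + 1)).1.1) :=
    fun i => Classical.choose_spec (key (U i))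
  have hU0 : (U 0).1.1 = u := rfl
  -- finite path segments for each milestone jump
  have seg : ∀ i, ∃ (m : ℕ) (q : ℕ → S), 0 < m ∧ q 0 = (U i).1.1 ∧ q m = (U (i + 1)).1.1 ∧
      ∀ j < m, L.TauStep (q j) (q (j + 1)) := fun i => pathOfPlus (hU i)
  let M : ℕ → ℕ := fun i => (seg i).choose
  let Q : ℕ → ℕ → S := fun i => (seg i).choose_spec.choose
  have Mpos : ∀ i, 0 < M i := fun i => (seg i).choose_spec.choose_spec.1
  have Q0 : ∀ i, Q i 0 = (U i).1.1 := fun i => (seg i).choose_spec.choose_spec.2.1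
  have QM : ∀ i, Q i (M i) = (U (i + 1)).1.1 := fun i => (seg i).choose_spec.choose_spec.2.2.1
  have Qstep : ∀ i, ∀ j < M i, L.TauStep (Q i j) (Q i (j + 1)) :=
    fun i => (seg i).choose_spec.choose_spec.2.2.2
  -- cumulative lengths
  let cum : ℕ → ℕ := fun i => Nat.rec (motive := fun _ => ℕ) 0 (fun j acc => acc + M j) i
  have cum_succ : ∀ i, cum (i + 1) = cum i + M i := fun _ => rfl
  have cumMono : StrictMono cum := strictMono_nat_of_lt_succ (fun i => by
    have h1 := Mpos i; have h2 := cum_succ i; omega)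
  have cum_ge : ∀ i, i ≤ cum i := by
    intro i
    induction i with
    | zero => exact Nat.le_refl 0
    | succ n ih => have := Mpos n; have := cum_succ n; omega
  -- the concatenated divergence of `u`
  let I : ℕ → ℕ := fun n => Nat.findGreatest (fun i => cum i ≤ n) n
  have hcum0 : cum 0 = 0 := rfl
  have hIle : ∀ n, cum (I n) ≤ n := fun n =>
    Nat.findGreatest_spec (P := fun i => cum i ≤ n) (Nat.zero_le n)
      (le_of_eq_of_le hcum0 (Nat.zero_le n))
  have hIub : ∀ n, n < cum (I n + 1) := by
    intro n
    by_contra hcon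
    push_neg at hcon
    have h1 : I n + 1 ≤ n := le_trans (cum_ge _) hcon
    have h2 : I n + 1 ≤ I n := Nat.le_findGreatest h1 hcon
    omega
  have hIcum : ∀ i, I (cum i) = i := by
    intro i
    refine Nat.le_antisymm ?_ (Nat.le_findGreatest (cum_ge i) le_rfl)
    exact (cumMono.le_iff_le).mp (hIle (cum i))
  let g : ℕ → S := fun n => Q (I n) (n - cum (I n))
  have g_cum : ∀ i, g (cum i) = (U i).1.1 := by
    intro i
    show Q (I (cum i)) (cum i - cum (I (cum i))) = (U i).1.1
    rw [hIcum i, Nat.sub_self, Q0]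
  have g0 : g 0 = u := by
    have := g_cum 0
    exact this.trans hU0
  have gstep : ∀ n, L.TauStep (g n) (g (n + 1)) := by
    intro n
    have h1 : cum (I n) ≤ n := hIle n
    have h2 : n < cum (I n + 1) := hIub n
    have hcs : cum (I n + 1) = cum (I n) + M (I n) := cum_succ (I n)
    have hge : I n ≤ cum (I n) := cum_ge (I n)
    have hlt : n - cum (I n) < M (I n) := by omega
    have hstep := Qstep (I n) _ hlt
    have hgn : g n = Q (I n) (n - cum (I n)) := rfl
    rcases Nat.lt_or_ge (n + 1) (cum (I n + 1)) with hc | hc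
    · have hIeq : I (n + 1) = I n := by
        refine Nat.le_antisymm ?_ (Nat.le_findGreatest (by omega) (by omega))
        have h3 := hIle (n + 1)
        have hlt2 : cum (I (n + 1)) < cum (I n + 1) := by omega
        exact Nat.lt_succ_iff.mp (cumMono.lt_iff_lt.mp hlt2)
      have hgn1 : g (n + 1) = Q (I n) (n + 1 - cum (I n)) := by
        show Q (I (n + 1)) (n + 1 - cum (I (n + 1))) = _
        rw [hIeq]
      rw [hgn, hgn1, show n + 1 - cum (I n) = (n - cum (I n)) + 1 by omega]
      exact hstep
    · have hc' : n + 1 = cum (I n + 1) := by omega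
      have hgn1 : g (n + 1) = Q (I n) (M (I n)) := by
        rw [hc']
        exact (g_cum (I n + 1)).trans (QM (I n)).symm
      have hM : M (I n) = (n - cum (I n)) + 1 := by omega
      rw [hgn, hgn1, hM]
      exact hstep
  have gmono : ∀ a b : ℕ, a ≤ b → L.TauStar (g a) (g b) := by
    intro a b hab
    induction hab with
    | refl => exact Relation.ReflTransGen.refl
    | step _ ih => exact Relation.ReflTransGen.tail ih (gstep _)
  -- apply explicit divergence of R'' to the divergence g of u
  obtain ⟨t1, m, htp, hgm⟩ := hR''.2.2 _ _ hut g g0 gstep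
  have hreach : L.TauStar (g m) ((U m).1.1) := by
    have := gmono m (cum m) (cum_ge m)
    rwa [g_cum m] at this
  obtain ⟨t2, ht12, hUt2⟩ := semi_star hR''.2.1 hreach hgm
  exact ⟨t2, (U m).1.2, Relation.TransGen.trans_left htp ht12,
    ⟨(U m).1.1, (U m).2, hUt2⟩⟩

/-- The symmetrized composition of two semi bisimulations is a semi bisimulation. -/
theorem comp_semi {L : LTS S A} {x y : XY} {R1 R2 : S → S → Prop}
    (h1 : L.IsSemi x y R1) (h2 : L.IsSemi x y R2) :
    L.IsSemi x y (fun p q => (∃ v, R1 p v ∧ R2 v q) ∨ (∃ v, R2 p v ∧ R1 v q)) := by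
  refine ⟨?_, ?_, ?_⟩
  · rintro p q (⟨v, hv1, hv2⟩ | ⟨v, hv1, hv2⟩)
    · exact Or.inr ⟨v, h2.1 _ _ hv2, h1.1 _ _ hv1⟩
    · exact Or.inl ⟨v, h1.1 _ _ hv2, h2.1 _ _ hv1⟩
  · rintro s t a s' (⟨v, hv1, hv2⟩ | ⟨v, hv1, hv2⟩) htr
    · exact (comp_move h1 h2 hv1 hv2 htr).mono (fun _ _ h => Or.inl h)
    · exact (comp_move h2 h1 hv1 hv2 htr).mono (fun _ _ h => Or.inr h)
  · rintro s t (⟨v, hv1, hv2⟩ | ⟨v, hv1, hv2⟩) f hf0 hfs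
    · obtain ⟨t', m, ha, hb⟩ := comp_ED h1 h2 hv1 hv2 f hf0 hfs
      exact ⟨t', m, ha, Or.inl hb⟩
    · obtain ⟨t', m, ha, hb⟩ := comp_ED h2 h1 hv1 hv2 f hf0 hfs
      exact ⟨t', m, ha, Or.inr hb⟩

/-- Semi `(x,y)`-generic bisimilarity with explicit divergence. -/
def ESem (L : LTS S A) (x y : XY) : S → S → Prop :=
  fun s t => ∃ R, L.IsSemi x y R ∧ R s t

theorem ESem_semi (L : LTS S A) (x y : XY) : L.IsSemi x y (L.ESem x y) := by
  refine ⟨?_, ?_, ?_⟩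
  · rintro s t ⟨R, hR, h⟩; exact ⟨R, hR, hR.1 _ _ h⟩
  · rintro s t a s' ⟨R, hR, h⟩ htr
    exact (hR.2.1 _ _ _ _ h htr).mono (fun p q hpq => ⟨R, hR, hpq⟩)
  · rintro s t ⟨R, hR, h⟩ f hf0 hfs
    obtain ⟨t', m, ha, hb⟩ := hR.2.2 _ _ h f hf0 hfs
    exact ⟨t', m, ha, R, hR, hb⟩

theorem ESem_symm {L : LTS S A} {x y : XY} {s t : S} (h : L.ESem x y s t) :
    L.ESem x y t s := (ESem_semi L x y).1 _ _ h

theorem ESem_trans {L : LTS S A} {x y : XY} {s u t : S} (h1 : L.ESem x y s u)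
    (h2 : L.ESem x y u t) : L.ESem x y s t := by
  obtain ⟨R1, hR1, hs⟩ := h1
  obtain ⟨R2, hR2, hu⟩ := h2
  exact ⟨_, comp_semi hR1 hR2, Or.inl ⟨u, hs, hu⟩⟩

theorem ESem_stutter {L : LTS S A} {x y : XY} {k : ℕ} {t : ℕ → S}
    (hpath : ∀ i < k, L.TauStep (t i) (t (i + 1))) (h : L.ESem x y (t 0) (t k)) :
    ∀ i j, i ≤ k → j ≤ k → L.ESem x y (t i) (t j) := by
  obtain ⟨R, hR, hRk⟩ := h
  exact fun i j hi hj => ⟨_, semi_stutter hR hpath hRk, Or.inr ⟨i, j, hi, hj, rfl, rfl⟩⟩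

/-- Semi generic bisimilarity with explicit divergence is a *strict* generic
bisimulation with explicit divergence. -/
theorem ESem_strict (L : LTS S A) (x y : XY) : L.IsGenBisimED x y (L.ESem x y) := by
  refine ⟨⟨fun s t h => ESem_symm h, ?_⟩, (ESem_semi L x y).2.2⟩
  intro s t a s' hE htr
  rcases (ESem_semi L x y).2.1 s t a s' hE htr with ⟨ha, t', hstar, hs't', hx⟩ | full
  · rcases hstar.cases_tail with heq | ⟨tb, httb, hstep⟩
    · exact Or.inl ⟨ha, heq ▸ hs't'⟩
    · have hstbE : x = XY.b → L.ESem x y s tb := by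
        intro hb
        have htEt' : L.ESem x y t t' := ESem_trans (ESem_symm hE) (hx hb)
        obtain ⟨m, q, hq0, hqm, hqs⟩ := pathOfStar (L := L) httb
        set q' : ℕ → S := fun i => if i ≤ m then q i else t' with hq'
        have hq'0 : q' 0 = t := by simp [hq', hq0]
        have hq'm : q' m = tb := by simp [hq', hqm]
        have hq'top : q' (m + 1) = t' := by simp [hq']
        have hq's : ∀ i < m + 1, L.TauStep (q' i) (q' (i + 1)) := by
          intro i hi
          rcases Nat.lt_or_ge i m with him | him
          · simpa [hq', Nat.le_of_lt him, Nat.succ_le_of_lt him] using hqs i him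
          · have : i = m := Nat.le_antisymm (Nat.lt_succ_iff.mp hi) him
            subst this
            simpa [hq', hqm] using hstep
        have hend : L.ESem x y (q' 0) (q' (m + 1)) := by
          rw [hq'0, hq'top]; exact htEt'
        have := ESem_stutter hq's hend 0 m (Nat.zero_le _) (Nat.le_succ m)
        rw [hq'0, hq'm] at this
        exact ESem_trans hE this
      refine Or.inr ⟨tb, t', t', ⟨httb, fun hb => ⟨hE, hstbE hb⟩⟩, ha ▸ hstep,
        ⟨Relation.ReflTransGen.refl, fun _ => ⟨hs't', hs't'⟩⟩, hs't'⟩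
  · exact Or.inr full

end LTS


/-- For all `x, y ∈ {o,b}`, `(x,y)`-generic bisimilarity with
explicit divergence satisfies the stuttering property. -/
theorem genBisimilarED_stutteringProperty {S : Type u} {A : Type v} (L : LTS S A)
    (x y : XY) :
    StutteringProperty L (L.GenBisimilarED x y) := by
  intro k t hpath h0k i j hi hj
  obtain ⟨R, hR, hR0k⟩ := h0k
  have hstut := LTS.semi_stutter hR.isSemi hpath hR0k
  exact ⟨L.ESem x y, LTS.ESem_strict L x y,
    ⟨_, hstut, Or.inr ⟨i, j, hi, hj, rfl, rfl⟩⟩⟩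

end GamesBisim
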